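/- arXiv:2305.14350 — 5 statements merged into one kernel-verified Lean document; each statement's English description precedes it below -/
import Mathlib

section
/- If n = p_1^{α_1} p_2^{α_2} ⋯ p_r^{α_r} is a highly composite number (every m < n has d(m) < d(n)), then the primes p_1 < p_2 < ⋯ < p_r appearing in n are exactly the first r primes (i.e., n's prime factors form an initial segment of the primes). -/
/-- `d n`: number of positive divisors of `n`. -/
def d (n : ℕ) : ℕ := (Nat.divisors n).card

/-- A positive integer `n` is highly composite if every smaller positive
integer has strictly fewer divisors. -/
def HighlyComposite (n : ℕ) : Prop :=
  0 < n ∧ ∀ m : ℕ, 0 < m → m < n → d m < d n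

lemma d_prime_pow {p : ℕ} (pp : p.Prime) (k : ℕ) : d (p ^ k) = k + 1 := by
  unfold d
  rw [Nat.divisors_prime_pow pp]
  simp

/-- The prime factors of a highly composite number form an initial segment
of the primes. -/
theorem stmt_0 (n : ℕ) (hn : HighlyComposite n) :
    ∀ p q : ℕ, p.Prime → q.Prime → q ≤ p → p ∣ n → q ∣ n := by
  intro p q hp hq hqp hpn
  by_contra hqn
  have hn0 : 0 < n := hn.1
  have hqp' : q < p := lt_of_le_of_ne hqp (by rintro rfl; exact hqn hpn)
  set a := n.factorization p with ha
  have ha1 : 1 ≤ a := hp.factorization_pos_of_dvd hn0.ne' hpn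
  set s := n / p ^ a with hs
  have hns : n = p ^ a * s := (Nat.ordProj_mul_ordCompl_eq_self n p).symm
  have hs0 : 0 < s := Nat.ordCompl_pos p hn0.ne'
  have hps : ¬ p ∣ s := Nat.not_dvd_ordCompl hp hn0.ne'
  have hqs : ¬ q ∣ s := fun h => hqn (h.trans ⟨p ^ a, by rw [hns]; ring⟩)
  set m := p ^ (a - 1) * (q * s) with hm
  have hp0 : 0 < p := hp.pos
  have hq0 : 0 < q := hq.pos
  have hm0 : 0 < m := by positivity
  have hmn : m < n := by
    have h1 : n = p ^ (a - 1) * (p * s) := by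
      rw [hns, ← mul_assoc, ← pow_succ, Nat.sub_add_cancel ha1]
    rw [h1, hm]
    have hpp : 0 < p ^ (a - 1) := pow_pos hp0 _
    exact Nat.mul_lt_mul_of_pos_left (Nat.mul_lt_mul_of_pos_right hqp' hs0) hpp
  have hcop1 : Nat.Coprime (p ^ (a - 1)) (q * s) := by
    refine Nat.Coprime.pow_left _ ?_
    refine (Nat.coprime_mul_iff_right).2 ⟨?_, ?_⟩
    · exact (Nat.coprime_primes hp hq).2 (Nat.ne_of_gt hqp')
    · exact (Nat.Prime.coprime_iff_not_dvd hp).2 hps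
  have hcop2 : Nat.Coprime q s := (Nat.Prime.coprime_iff_not_dvd hq).2 hqs
  have hcop3 : Nat.Coprime (p ^ a) s := Nat.Coprime.pow_left _
    ((Nat.Prime.coprime_iff_not_dvd hp).2 hps)
  have hdm : d m = a * (2 * d s) := by
    rw [hm]
    unfold d
    rw [hcop1.card_divisors_mul, hcop2.card_divisors_mul]
    have h1 : (Nat.divisors (p ^ (a - 1))).card = a := by
      have := d_prime_pow hp (a - 1)
      unfold d at this
      rw [this, Nat.sub_add_cancel ha1]
    have h2 : (Nat.divisors q).card = 2 := by
      have := d_prime_pow hq 1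
      unfold d at this
      simpa using this
    rw [h1, h2]
  have hdn : d n = (a + 1) * d s := by
    rw [hns]
    unfold d
    rw [hcop3.card_divisors_mul]
    have := d_prime_pow hp a
    unfold d at this
    rw [this]
  have hlt := hn.2 m hm0 hmn
  rw [hdm, hdn] at hlt
  have hds : 1 ≤ d s := by
    unfold d
    exact Finset.card_pos.2 ⟨1, Nat.one_mem_divisors.2 hs0.ne'⟩
  nlinarith
end

section
/- If n is a highly composite number with n ∉ {1, 4, 36} and n > 1, then the exponent of the largest prime factor of n equals 1 (i.e., n is not divisible by the square of its largest prime factor). -/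
lemma d_mul {m k : ℕ} (h : Nat.Coprime m k) : d (m * k) = d m * d k :=
  Nat.Coprime.card_divisors_mul h

lemma d_pp {p : ℕ} (hp : p.Prime) (e : ℕ) : d (p ^ e) = e + 1 := by
  unfold d
  rw [Nat.divisors_prime_pow hp, Finset.card_map, Finset.card_range]

lemma cop {p k : ℕ} (hp : p.Prime) (h : ¬ p ∣ k) : Nat.Coprime p k :=
  (Nat.Prime.coprime_iff_not_dvd hp).mpr h

/-- decomposition `n = p ^ (n.factorization p) * k` with `p ∤ k`. -/
lemma decomp (n p : ℕ) (hp : p.Prime) (hn : n ≠ 0) :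
    ∃ k, n = p ^ n.factorization p * k ∧ ¬ p ∣ k ∧ k ≠ 0 ∧
      ∀ r, r ≠ p → k.factorization r = n.factorization r := by
  refine ⟨ordCompl[p] n, (Nat.ordProj_mul_ordCompl_eq_self n p).symm,
    Nat.not_dvd_ordCompl hp hn, Nat.ordCompl_pos p hn |>.ne', fun r hr => ?_⟩
  rw [Nat.factorization_ordCompl n p, Finsupp.erase_ne hr]

lemma hc_absurd {n : ℕ} (hn : HighlyComposite n) {m : ℕ} (hm : 0 < m) (hlt : m < n)
    (hd : d n ≤ d m) : False :=
  absurd (hn.2 m hm hlt) (not_lt.mpr hd)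

lemma eq_one_of_no_prime {k : ℕ} (hk : k ≠ 0) (h : ∀ r : ℕ, r.Prime → ¬ r ∣ k) : k = 1 := by
  by_contra hk1
  obtain ⟨r, hr, hrk⟩ := Nat.exists_prime_and_dvd hk1
  exact h r hr hrk

/-- Exponent-swap lemma: in a highly composite number, exponents of primes are
nonincreasing. -/
lemma swap_le {n q r : ℕ} (hn : HighlyComposite n) (hq : q.Prime) (hr : r.Prime)
    (hqr : q < r) : n.factorization r ≤ n.factorization q := by
  by_contra hlt
  push_neg at hlt
  set α := n.factorization q with hα
  set β := n.factorization r with hβ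
  have hn0 : n ≠ 0 := hn.1.ne'
  -- decompose n = q^α * (r^β * k)
  obtain ⟨k1, hk1, hqk1, hk10, hfk1⟩ := decomp n q hq hn0
  have hβ1 : k1.factorization r = β := hfk1 r (fun h => by subst h; omega)
  obtain ⟨k, hk, hrk, hk0, hfk⟩ := decomp k1 r hr hk10
  rw [hβ1] at hk
  have hqk : ¬ q ∣ k := fun h => hqk1 (hk ▸ Dvd.dvd.mul_left h _)
  -- m = q^β * r^α * k
  set m := q ^ β * (r ^ α * k) with hm
  have hcop1 : Nat.Coprime (r ^ α) k := (cop hr hrk).pow_left _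
  have hcop2 : Nat.Coprime (q ^ β) (r ^ α * k) :=
    Nat.Coprime.pow_left _ (Nat.Coprime.mul_right
      (((Nat.coprime_primes hq hr).mpr hqr.ne).pow_right _) (cop hq hqk))
  have hcop1' : Nat.Coprime (r ^ β) k := (cop hr hrk).pow_left _
  have hcop2' : Nat.Coprime (q ^ α) (r ^ β * k) :=
    Nat.Coprime.pow_left _ (Nat.Coprime.mul_right
      (((Nat.coprime_primes hq hr).mpr hqr.ne).pow_right _) (cop hq hqk))
  have hneq : n = q ^ α * (r ^ β * k) := by rw [hk1, hk]
  have hdm : d m = d n := by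
    rw [hm, hneq, d_mul hcop2, d_mul hcop1, d_mul hcop2', d_mul hcop1',
      d_pp hq, d_pp hr, d_pp hq, d_pp hr]
    ring
  have hmn : m < n := by
    rw [hm, hneq]
    have h1 : q ^ β * r ^ α < q ^ α * r ^ β := by
      obtain ⟨γ, hγ, hγ0⟩ : ∃ γ, β = α + γ ∧ 0 < γ := ⟨β - α, by omega, by omega⟩
      have h2 : q ^ γ < r ^ γ := Nat.pow_lt_pow_left hqr (by omega)
      rw [hγ, pow_add, pow_add]
      calc q ^ α * q ^ γ * r ^ α = (q ^ α * r ^ α) * q ^ γ := by ring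
        _ < (q ^ α * r ^ α) * r ^ γ :=
            Nat.mul_lt_mul_of_pos_left h2
              (Nat.mul_pos (pow_pos hq.pos _) (pow_pos hr.pos _))
        _ = q ^ α * (r ^ α * r ^ γ) := by ring
    calc q ^ β * (r ^ α * k) = (q ^ β * r ^ α) * k := by ring
      _ < (q ^ α * r ^ β) * k :=
          Nat.mul_lt_mul_of_pos_right h1 (Nat.pos_of_ne_zero hk0)
      _ = q ^ α * (r ^ β * k) := by ring
  have hm0 : 0 < m :=
    Nat.mul_pos (pow_pos hq.pos _) (Nat.mul_pos (pow_pos hr.pos _) (Nat.pos_of_ne_zero hk0))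
  exact hc_absurd hn hm0 hmn (le_of_eq hdm.symm)

lemma d_pos {k : ℕ} (hk : k ≠ 0) : 0 < d k := by
  unfold d
  rw [Finset.card_pos]
  exact ⟨1, Nat.one_mem_divisors.mpr hk⟩

lemma d_prime {p : ℕ} (hp : p.Prime) : d p = 2 := by
  have := d_pp hp 1
  simpa using this

lemma d900 : d 900 = 27 := by
  have h : (900 : ℕ) = 2 ^ 2 * (3 ^ 2 * 5 ^ 2) := by norm_num
  rw [h, d_mul (by decide), d_mul (by decide), d_pp Nat.prime_two,
    d_pp Nat.prime_three, d_pp (by norm_num)]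

lemma d840 : d 840 = 32 := by
  have h : (840 : ℕ) = 2 ^ 3 * (3 * (5 * 7)) := by norm_num
  rw [h, d_mul (by decide), d_mul (by decide), d_mul (by decide),
    d_pp Nat.prime_two, d_prime Nat.prime_three, d_prime (by norm_num),
    d_prime (by norm_num)]

lemma d44100 : d 44100 = 81 := by
  have h : (44100 : ℕ) = 2 ^ 2 * (3 ^ 2 * (5 ^ 2 * 7 ^ 2)) := by norm_num
  rw [h, d_mul (by decide), d_mul (by decide), d_mul (by decide),
    d_pp Nat.prime_two, d_pp Nat.prime_three, d_pp (by norm_num), d_pp (by norm_num)]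

lemma d27720 : d 27720 = 96 := by
  have h : (27720 : ℕ) = 2 ^ 3 * (3 ^ 2 * (5 * (7 * 11))) := by norm_num
  rw [h, d_mul (by decide), d_mul (by decide), d_mul (by decide), d_mul (by decide),
    d_pp Nat.prime_two, d_pp Nat.prime_three, d_prime (by norm_num),
    d_prime (by norm_num), d_prime (by norm_num)]

/-- Bertrand, strict form. -/
lemma bertrand' (p : ℕ) (hp : p.Prime) : ∃ q : ℕ, q.Prime ∧ p < q ∧ q < 2 * p := by
  obtain ⟨q, hq, h1, h2⟩ := Nat.exists_prime_lt_and_le_two_mul p hp.pos.ne'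
  refine ⟨q, hq, h1, lt_of_le_of_ne h2 ?_⟩
  intro h
  rcases (hq.eq_one_or_self_of_dvd 2 ⟨p, h⟩) with h' | h'
  · norm_num at h'
  · have := hp.two_le
    omega

/-- For highly composite n ∉ {1,4,36} with n > 1, the largest prime factor
of n has exponent 1. -/
theorem stmt_5 (n : ℕ) (hn : HighlyComposite n) (h1 : 1 < n)
    (hne : n ≠ 1 ∧ n ≠ 4 ∧ n ≠ 36)
    (p : ℕ) (hp : p.Prime) (hpdvd : p ∣ n)
    (hmax : ∀ q : ℕ, q.Prime → q ∣ n → q ≤ p) :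
    n.factorization p = 1 := by
  have hn0 : n ≠ 0 := by omega
  by_contra hne1
  have hepos : 0 < n.factorization p := hp.factorization_pos_of_dvd hn0 hpdvd
  have he2 : 2 ≤ n.factorization p := by omega
  set e := n.factorization p with he
  obtain ⟨k, hk, hpk, hk0, hfk⟩ := decomp n p hp hn0
  rw [← he] at hk
  have hkd : k ∣ n := ⟨p ^ e, by rw [hk]; ring⟩
  have hnot : ∀ q : ℕ, q.Prime → p < q → ¬ q ∣ k := by
    intro q hq hpq hdvd
    exact absurd (hmax q hq (hdvd.trans hkd)) (by omega)
  have hk0' : 0 < k := Nat.pos_of_ne_zero hk0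
  rcases lt_or_ge e 3 with h3 | h3
  · -- e = 2
    have he' : e = 2 := by omega
    rcases eq_or_lt_of_le hp.two_le with hp2 | hp3
    · -- p = 2 : n = 4
      have hk1 : k = 1 := by
        refine eq_one_of_no_prime hk0 fun r hr hrk => ?_
        have h2r : r ≤ p := hmax r hr (hrk.trans hkd)
        have : r = p := le_antisymm h2r (hp2 ▸ hr.two_le)
        exact hpk (this ▸ hrk)
      rw [hk1, he', ← hp2] at hk
      norm_num at hk
      exact hne.2.1 hk
    · -- p ≥ 3 : look at exponent of 2
      have hp2' : p ≠ 2 := by omega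
      have hoddp : p % 2 = 1 := Nat.odd_iff.mp (hp.odd_of_ne_two hp2')
      have ha2 : 2 ≤ n.factorization 2 := by
        have := swap_le hn Nat.prime_two hp hp3
        omega
      set a := n.factorization 2 with ha
      have h2k : k.factorization 2 = a := hfk 2 (by omega)
      obtain ⟨k2, hk2, h2k2, hk20, hfk2⟩ := decomp k 2 Nat.prime_two hk0
      rw [h2k] at hk2
      have hk2d : k2 ∣ k := ⟨2 ^ a, by rw [hk2]; ring⟩
      have hpk2 : ¬ p ∣ k2 := fun h => hpk (h.trans hk2d)
      have hk20' : 0 < k2 := Nat.pos_of_ne_zero hk20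
      have hnot2 : ∀ q : ℕ, q.Prime → p < q → ¬ q ∣ k2 :=
        fun q hq hpq hdvd => hnot q hq hpq (hdvd.trans hk2d)
      have hnk2 : n = p ^ 2 * (2 ^ a * k2) := by rw [hk, hk2, he']
      have hcopn : Nat.Coprime (p ^ 2) (2 ^ a * k2) :=
        Nat.Coprime.pow_left _ (Nat.Coprime.mul_right
          (((Nat.coprime_primes hp Nat.prime_two).mpr hp2').pow_right _) (cop hp hpk2))
      have hcopak2 : Nat.Coprime (2 ^ a) k2 := (cop Nat.prime_two h2k2).pow_left _
      have hdn : d n = 3 * ((a + 1) * d k2) := by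
        rw [hnk2, d_mul hcopn, d_mul hcopak2, d_pp hp, d_pp Nat.prime_two]
      rcases lt_or_ge a 3 with ha3 | ha3
      · -- a = 2
        have ha' : a = 2 := by omega
        rcases eq_or_lt_of_le (show (3:ℕ) ≤ p by omega) with hp33 | hp5
        · -- p = 3 : n = 36
          have hk21 : k2 = 1 := by
            refine eq_one_of_no_prime hk20 fun r hr hrk => ?_
            have h2r : r ≤ p := hmax r hr (hrk.trans (hk2d.trans hkd))
            have hr2 : r ≠ 2 := fun h => h2k2 (h ▸ hrk)
            have hrp : r ≠ p := fun h => hpk2 (h ▸ hrk)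
            have := hr.two_le
            omega
          rw [hk21, ha', ← hp33] at hnk2
          norm_num at hnk2
          exact hne.2.2 hnk2
        · rcases eq_or_lt_of_le (show (5:ℕ) ≤ p by omega) with hp55 | hp7'
          · -- p = 5 : n = 900
            have hb2 : n.factorization 3 = 2 := by
              have hb1 := swap_le hn Nat.prime_three hp (by omega)
              have hb2 := swap_le hn Nat.prime_two Nat.prime_three (by norm_num)
              omega
            have h3k2 : k2.factorization 3 = 2 := by
              rw [hfk2 3 (by norm_num), hfk 3 (by omega), hb2]
            obtain ⟨k3, hk3, h3k3, hk30, hfk3⟩ := decomp k2 3 Nat.prime_three hk20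
            rw [h3k2] at hk3
            have hk31 : k3 = 1 := by
              refine eq_one_of_no_prime hk30 fun r hr hrk => ?_
              have hrk2 : r ∣ k2 := hrk.trans ⟨3 ^ 2, by rw [hk3]; ring⟩
              have h2r : r ≤ p := hmax r hr (hrk2.trans (hk2d.trans hkd))
              have hr2 : r ≠ 2 := fun h => h2k2 (h ▸ hrk2)
              have hr3 : r ≠ 3 := fun h => h3k3 (h ▸ hrk)
              have hrp : r ≠ p := fun h => hpk2 (h ▸ hrk2)
              have hr4 : r ≠ 4 := fun h => by rw [h] at hr; norm_num at hr
              have := hr.two_le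
              omega
            have hn900 : n = 900 := by
              rw [hnk2, hk3, hk31, ha', ← hp55]
              norm_num
            have := hn.2 840 (by norm_num) (by omega)
            rw [hn900, d900, d840] at this
            omega
          · rcases eq_or_lt_of_le (show (7:ℕ) ≤ p by omega) with hp77 | hp11
            · -- p = 7 : n = 44100
              have hb2 : n.factorization 3 = 2 := by
                have hb1 := swap_le hn Nat.prime_three hp (by omega)
                have hb2 := swap_le hn Nat.prime_two Nat.prime_three (by norm_num)
                omega
              have hc2 : n.factorization 5 = 2 := by
                have hc1 := swap_le hn (by norm_num : Nat.Prime 5) hp (by omega)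
                have hc2 := swap_le hn Nat.prime_three (by norm_num : Nat.Prime 5)
                  (by norm_num)
                omega
              have h3k2 : k2.factorization 3 = 2 := by
                rw [hfk2 3 (by norm_num), hfk 3 (by omega), hb2]
              obtain ⟨k3, hk3, h3k3, hk30, hfk3⟩ := decomp k2 3 Nat.prime_three hk20
              rw [h3k2] at hk3
              have hk3d : k3 ∣ k2 := ⟨3 ^ 2, by rw [hk3]; ring⟩
              have h5k3 : k3.factorization 5 = 2 := by
                rw [hfk3 5 (by norm_num), hfk2 5 (by norm_num), hfk 5 (by omega), hc2]
              obtain ⟨k4, hk4, h5k4, hk40, hfk4⟩ := decomp k3 5 (by norm_num) hk30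
              rw [h5k3] at hk4
              have hk4d : k4 ∣ k3 := ⟨5 ^ 2, by rw [hk4]; ring⟩
              have hk41 : k4 = 1 := by
                refine eq_one_of_no_prime hk40 fun r hr hrk => ?_
                have hrk2 : r ∣ k2 := (hrk.trans hk4d).trans hk3d
                have h2r : r ≤ p := hmax r hr (hrk2.trans (hk2d.trans hkd))
                have hr2 : r ≠ 2 := fun h => h2k2 (h ▸ hrk2)
                have hr3 : r ≠ 3 := fun h => h3k3 (h ▸ (hrk.trans hk4d))
                have hr5 : r ≠ 5 := fun h => h5k4 (h ▸ hrk)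
                have hrp : r ≠ p := fun h => hpk2 (h ▸ hrk2)
                have hr4 : r ≠ 4 := fun h => by rw [h] at hr; norm_num at hr
                have hr6 : r ≠ 6 := fun h => by rw [h] at hr; norm_num at hr
                have := hr.two_le
                omega
              have hn44100 : n = 44100 := by
                rw [hnk2, hk3, hk4, hk41, ha', ← hp77]
                norm_num
              have := hn.2 27720 (by norm_num) (by omega)
              rw [hn44100, d44100, d27720] at this
              omega
            · -- p ≥ 11 (in fact p ≥ 8 suffices) : m = 2^4 * q * k2
              have hp8 : 8 ≤ p := by omega
              obtain ⟨q, hq, hpq, hq2⟩ := bertrand' p hp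
              have hqk2 : ¬ q ∣ k2 := hnot2 q hq hpq
              set m := 2 ^ 4 * (q * k2) with hm
              have hcop : Nat.Coprime (2 ^ 4) (q * k2) :=
                Nat.Coprime.pow_left _ (Nat.Coprime.mul_right
                  (((Nat.coprime_primes Nat.prime_two hq).mpr (by omega)).symm.symm)
                  (cop Nat.prime_two h2k2))
              have hdm : d m = 10 * d k2 := by
                rw [hm, d_mul hcop, d_mul (cop hq hqk2), d_pp Nat.prime_two, d_prime hq]
                ring
              have hmn : m < n := by
                have h5 : m = (4 * k2) * (4 * q) := by rw [hm]; ring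
                have h6 : n = (4 * k2) * (p ^ 2) := by rw [hnk2, ha']; ring
                rw [h5, h6]
                refine Nat.mul_lt_mul_of_pos_left ?_ (by omega)
                nlinarith
              have hm0 : 0 < m := by
                have := hq.pos
                positivity
              refine hc_absurd hn hm0 hmn ?_
              rw [hdn, hdm, ha']
              omega
      · -- a ≥ 3 : m = 2^(a-1) * p * q * k2
        obtain ⟨q, hq, hpq, hq2⟩ := bertrand' p hp
        have hqk2 : ¬ q ∣ k2 := hnot2 q hq hpq
        have hqp : q ≠ p := by omega
        have hq2' : q ≠ 2 := by omega
        set m := 2 ^ (a - 1) * (p * (q * k2)) with hm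
        have hcopm : Nat.Coprime (2 ^ (a - 1)) (p * (q * k2)) := by
          refine Nat.Coprime.pow_left _ (Nat.Coprime.mul_right ?_ (Nat.Coprime.mul_right ?_ ?_))
          · exact ((Nat.coprime_primes Nat.prime_two hp).mpr (Ne.symm hp2'))
          · exact ((Nat.coprime_primes Nat.prime_two hq).mpr (Ne.symm hq2'))
          · exact cop Nat.prime_two h2k2
        have hcopp : Nat.Coprime p (q * k2) :=
          Nat.Coprime.mul_right ((Nat.coprime_primes hp hq).mpr (Ne.symm hqp)) (cop hp hpk2)
        have hdm : d m = a * (2 * (2 * d k2)) := by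
          rw [hm, d_mul hcopm, d_mul hcopp, d_mul (cop hq hqk2), d_pp Nat.prime_two,
            d_prime hp, d_prime hq]
          congr 1
          omega
        have hA : 2 ^ a = 2 ^ (a - 1) * 2 := by
          rw [← pow_succ]
          congr 1
          omega
        have hmn : m < n := by
          have h5 : m = (2 ^ (a - 1) * p * k2) * q := by rw [hm]; ring
          have h6 : n = (2 ^ (a - 1) * p * k2) * (2 * p) := by rw [hnk2, hA]; ring
          rw [h5, h6]
          refine Nat.mul_lt_mul_of_pos_left hq2 ?_
          have h7 : 0 < 2 ^ (a - 1) := pow_pos (by norm_num) _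
          have := hp.pos
          positivity
        have hm0 : 0 < m := by
          have h7 : 0 < 2 ^ (a - 1) := pow_pos (by norm_num) _
          have := hp.pos
          have := hq.pos
          positivity
        refine hc_absurd hn hm0 hmn ?_
        rw [hdn, hdm]
        calc 3 * ((a + 1) * d k2) = (3 * a + 3) * d k2 := by ring
          _ ≤ (4 * a) * d k2 := Nat.mul_le_mul_right _ (by omega)
          _ = a * (2 * (2 * d k2)) := by ring
  · -- e ≥ 3 : m = p^(e-2) * q * k
    obtain ⟨q, hq, hpq, hq2⟩ := bertrand' p hp
    have hqk : ¬ q ∣ k := hnot q hq hpq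
    have hqp : q ≠ p := by omega
    set m := p ^ (e - 2) * (q * k) with hm
    have hcopm : Nat.Coprime (p ^ (e - 2)) (q * k) :=
      Nat.Coprime.pow_left _ (Nat.Coprime.mul_right
        ((Nat.coprime_primes hp hq).mpr (Ne.symm hqp)) (cop hp hpk))
    have hdm : d m = (e - 1) * (2 * d k) := by
      rw [hm, d_mul hcopm, d_mul (cop hq hqk), d_pp hp, d_prime hq]
      congr 1
      omega
    have hdn : d n = (e + 1) * d k := by
      rw [hk, d_mul ((cop hp hpk).pow_left _), d_pp hp]
    have hE : p ^ e = p ^ (e - 2) * p ^ 2 := by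
      rw [← pow_add]
      congr 1
      omega
    have hmn : m < n := by
      have h5 : m = (p ^ (e - 2) * k) * q := by rw [hm]; ring
      have h6 : n = (p ^ (e - 2) * k) * (p ^ 2) := by rw [hk, hE]; ring
      rw [h5, h6]
      refine Nat.mul_lt_mul_of_pos_left ?_ ?_
      · have := hp.two_le
        nlinarith
      · have h7 : 0 < p ^ (e - 2) := pow_pos hp.pos _
        positivity
    have hm0 : 0 < m := by
      have h7 : 0 < p ^ (e - 2) := pow_pos hp.pos _
      have := hq.pos
      positivity
    refine hc_absurd hn hm0 hmn ?_
    rw [hdn, hdm]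
    calc (e + 1) * d k ≤ (2 * (e - 1)) * d k := Nat.mul_le_mul_right _ (by omega)
      _ = (e - 1) * (2 * d k) := by ring
end

section
/- For every real x > 300, π(x) − π(x/2) > (1/log x)·(x/6 − 3√x), where π is the prime counting function. -/
/-!
Erdős's proof of Bertrand's postulate, made quantitative. In the factorisation of
`centralBinom n`, primes `p ≤ √(2n)` contribute at most `2n` each, primes in `(√(2n), n]`
occur at most to the first power and not at all above `2n/3`, so they contribute at most
`primorial (2n/3) ≤ 4 ^ (2n/3)`, and primes in `(n, 2n]` contribute at most `2n` each.
Comparing with `4 ^ n < n · centralBinom n` and taking logarithms,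
`(π(2n) − π(n)) log(2n) > (n/3) log 4 − log n − (√(2n)/2 + 1) log(2n)`,
and for `x ≥ 324` the right-hand side (with `2n = 2⌊x/2⌋`) exceeds `x/6 − 3√x`.
Below `324` the bound `x/6 − 3√x` is negative.
-/

open Finset
open scoped Nat.Prime

namespace Nat

theorem centralBinom_eq_prod_primesLE (n : ℕ) :
    centralBinom n = ∏ p ∈ primesLE (2 * n), p ^ (centralBinom n).factorization p := by
  rw [primesLE_eq_filter_range, prod_filter_of_ne, prod_pow_factorization_centralBinom]
  intro p _ hp
  by_contra hnp
  simp [factorization_eq_zero_of_not_prime _ hnp] at hp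

theorem prod_pow_factorization_centralBinom_le_pow_card {n : ℕ} (hn : 0 < n) (s : Finset ℕ) :
    ∏ p ∈ s, p ^ (centralBinom n).factorization p ≤ (2 * n) ^ #s := by
  rw [← prod_const]
  exact prod_le_prod' fun p _ => pow_factorization_choose_le (by omega)

theorem prod_pow_factorization_centralBinom_sdiff_le {n : ℕ} (hn : 2 < n) :
    ∏ p ∈ primesLE n \ primesLE (sqrt (2 * n)), p ^ (centralBinom n).factorization p ≤
      4 ^ (2 * n / 3) := by
  set B := primesLE n \ primesLE (sqrt (2 * n))
  have mem_B {p : ℕ} (hp : p ∈ B) : p.Prime ∧ p ≤ n ∧ sqrt (2 * n) < p := by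
    simp only [B, mem_sdiff, mem_primesLE, not_and] at hp
    exact ⟨hp.1.2, hp.1.1, lt_of_not_ge fun h => hp.2 h hp.1.2⟩
  calc ∏ p ∈ B, p ^ (centralBinom n).factorization p
      = ∏ p ∈ B ∩ primesLE (2 * n / 3), p ^ (centralBinom n).factorization p := by
        refine (prod_subset inter_subset_left fun p hpB hp => ?_).symm
        obtain ⟨hprime, hpn, -⟩ := mem_B hpB
        have h3p : 2 * n < 3 * p := by
          simp only [mem_inter, mem_primesLE, not_and] at hp
          have : ¬p ≤ 2 * n / 3 := fun h => hp hpB h hprime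
          omega
        rw [factorization_centralBinom_of_two_mul_self_lt_three_mul hn hpn h3p, pow_zero]
    _ ≤ ∏ p ∈ B ∩ primesLE (2 * n / 3), p := by
        refine prod_le_prod' fun p hp => ?_
        obtain ⟨hprime, -, hsqrt⟩ := mem_B (mem_inter.1 hp).1
        exact (pow_le_pow_right₀ hprime.one_lt.le
          (factorization_choose_le_one (sqrt_lt'.1 hsqrt))).trans (pow_one p).le
    _ ≤ primorial (2 * n / 3) :=
        prod_le_prod_of_subset_of_one_le' inter_subset_right
          fun p hp _ => (prime_of_mem_primesLE hp).one_lt.le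
    _ ≤ 4 ^ (2 * n / 3) := primorial_le_four_pow _

theorem centralBinom_le_pow_primeCounting_mul {n : ℕ} (hn : 2 < n) :
    centralBinom n ≤
      (2 * n) ^ π (sqrt (2 * n)) * 4 ^ (2 * n / 3) * (2 * n) ^ (π (2 * n) - π n) := by
  have h_sqrt : primesLE (sqrt (2 * n)) ⊆ primesLE n :=
    primesLE_mono (sqrt_lt'.2 (by nlinarith)).le
  have h_two_mul : primesLE n ⊆ primesLE (2 * n) := primesLE_mono (by omega)
  have h_large := prod_pow_factorization_centralBinom_le_pow_card (by omega : 0 < n)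
    (primesLE (2 * n) \ primesLE n)
  have h_small := prod_pow_factorization_centralBinom_le_pow_card (by omega : 0 < n)
    (primesLE (sqrt (2 * n)))
  rw [card_sdiff_of_subset h_two_mul, primesLE_card_eq_primeCounting,
    primesLE_card_eq_primeCounting] at h_large
  rw [primesLE_card_eq_primeCounting] at h_small
  rw [centralBinom_eq_prod_primesLE, ← prod_sdiff h_two_mul, ← prod_sdiff h_sqrt]
  calc _ ≤ (2 * n) ^ (π (2 * n) - π n) * (4 ^ (2 * n / 3) * (2 * n) ^ π (sqrt (2 * n))) :=
        Nat.mul_le_mul h_large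
          (Nat.mul_le_mul (prod_pow_factorization_centralBinom_sdiff_le hn) h_small)
    _ = _ := by ring

theorem primeCounting_le_half_add_one (n : ℕ) : (π n : ℝ) ≤ n / 2 + 1 := by
  obtain hn | ⟨k, rfl⟩ : n < 2 ∨ ∃ k, n = 2 + k := by
    rcases lt_or_ge n 2 with h | h
    · exact .inl h
    · exact .inr ⟨n - 2, by omega⟩
  · rw [primeCounting_eq_zero_iff.2 (by omega), cast_zero]
    positivity
  · have h := primeCounting_add_le two_ne_zero le_rfl k
    rw [totient_two, one_mul, show π 2 = 1 by decide] at h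
    have h_div : ((k / 2 : ℕ) : ℝ) ≤ k / 2 := cast_div_le
    have h_cast : (π (2 + k) : ℝ) ≤ 1 + ((k / 2 : ℕ) : ℝ) + 1 := by exact_mod_cast h
    push_cast
    linarith

theorem primeCounting_sub_mul_log_gt {n : ℕ} (hn : 4 ≤ n) :
    n / 3 * Real.log 4 - Real.log n - π (sqrt (2 * n)) * Real.log (2 * n) <
      (π (2 * n) - π n) * Real.log (2 * n) := by
  have h_nat := (four_pow_lt_mul_centralBinom n hn).trans_le
    (Nat.mul_le_mul_left n (centralBinom_le_pow_primeCounting_mul (by omega)))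
  have h_real : (4 : ℝ) ^ n < n * ((2 * n) ^ π (sqrt (2 * n)) * 4 ^ (2 * n / 3) *
      (2 * n) ^ (π (2 * n) - π n)) := by exact_mod_cast h_nat
  have hn_pos : (0 : ℝ) < n := by positivity
  have h_log := Real.log_lt_log (by positivity) h_real
  rw [Real.log_pow, Real.log_mul (by positivity) (by positivity),
    Real.log_mul (by positivity) (by positivity), Real.log_mul (by positivity) (by positivity),
    Real.log_pow, Real.log_pow, Real.log_pow, cast_sub (monotone_primeCounting (by omega))] at h_log
  have h_div : ((2 * n / 3 : ℕ) : ℝ) ≤ 2 * n / 3 := by exact_mod_cast cast_div_le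
  have h_log4 : 0 < Real.log 4 := Real.log_pos (by norm_num)
  nlinarith

end Nat

theorem Real.log_eighteen_lt_three : Real.log 18 < 3 := by
  rw [Real.log_lt_iff_lt_exp (by norm_num)]
  calc (18 : ℝ) < 2.7182818283 ^ 3 := by norm_num
    _ < Real.exp 1 ^ 3 := by gcongr; exact Real.exp_one_gt_d9
    _ = Real.exp 3 := by rw [← Real.exp_nat_mul]; norm_num

theorem div_six_sub_three_mul_sqrt_le {x : ℝ} (hx : 18 ≤ √x) :
    x / 6 - 3 * √x ≤
      (x - 2) / 6 * Real.log 4 - Real.log (x / 2) - (√x / 2 + 1) * Real.log x := by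
  have hx0 : 0 < x := Real.sqrt_pos.1 (by linarith)
  set t := √x
  have ht : x = t ^ 2 := (Real.sq_sqrt hx0.le).symm
  -- tangent line of `log` at `18`
  have h_log_t : Real.log t ≤ Real.log 18 - 1 + t / 18 := by
    have := Real.log_le_sub_one_of_pos (show 0 < t / 18 by positivity)
    rw [Real.log_div (by positivity) (by norm_num)] at this
    linarith
  have h_log_x : Real.log x = 2 * Real.log t := by rw [ht, Real.log_pow]; push_cast; ring
  have h_log_4 : Real.log 4 = 2 * Real.log 2 := by
    rw [show (4 : ℝ) = 2 ^ 2 by norm_num, Real.log_pow]; push_cast; ring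
  rw [Real.log_div hx0.ne' two_ne_zero, h_log_x, h_log_4, ht]
  -- the remaining gap is `t² (log 2 / 3 - 2 / 9) + t (25 / 9 - a) + log 2 / 3 - 4 a`
  -- with `a = log 18 - 1 < 2`, which is positive for `t ≥ 18`
  have := Real.log_two_gt_d9
  have := Real.log_eighteen_lt_three
  nlinarith [mul_le_mul_of_nonneg_left h_log_t (by positivity : (0 : ℝ) ≤ t + 4)]

theorem div_six_sub_three_mul_sqrt_lt_primeCounting_sub_mul_log {n : ℕ} {x : ℝ}
    (hx : 18 ≤ √x) (h_lower : 2 * n ≤ x) (h_upper : x < 2 * n + 2) :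
    x / 6 - 3 * √x < (π (2 * n) - π n) * Real.log x := by
  have hx0 : 0 < x := Real.sqrt_pos.1 (by linarith)
  have hn : 4 ≤ n := by
    have : (4 : ℝ) ≤ n := by nlinarith [Real.sq_sqrt hx0.le]
    exact_mod_cast this
  have h_log : Real.log (2 * n) ≤ Real.log x := Real.log_le_log (by positivity) h_lower
  have h_log_nonneg : 0 ≤ Real.log (2 * n) := Real.log_nonneg (by norm_cast; omega)
  have h_sqrt : (π (Nat.sqrt (2 * n)) : ℝ) ≤ √x / 2 + 1 := by
    refine (Nat.primeCounting_le_half_add_one _).trans ?_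
    have : (Nat.sqrt (2 * n) : ℝ) ≤ √x :=
      Real.nat_sqrt_le_real_sqrt.trans (Real.sqrt_le_sqrt (by push_cast; exact h_lower))
    linarith
  have h_gap : (0 : ℝ) ≤ π (2 * n) - π n :=
    sub_nonneg.2 (Nat.cast_le.2 (Nat.monotone_primeCounting (by omega)))
  calc x / 6 - 3 * √x
      ≤ (x - 2) / 6 * Real.log 4 - Real.log (x / 2) - (√x / 2 + 1) * Real.log x :=
        div_six_sub_three_mul_sqrt_le hx
    _ ≤ n / 3 * Real.log 4 - Real.log n - π (Nat.sqrt (2 * n)) * Real.log (2 * n) := by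
        have h₁ : (x - 2) / 6 * Real.log 4 ≤ n / 3 * Real.log 4 :=
          mul_le_mul_of_nonneg_right (by linarith) (Real.log_nonneg (by norm_num))
        have h₂ : Real.log n ≤ Real.log (x / 2) :=
          Real.log_le_log (by norm_cast; omega) (by linarith)
        have h₃ := mul_le_mul h_sqrt h_log h_log_nonneg (by positivity)
        linarith
    _ < (π (2 * n) - π n) * Real.log (2 * n) := Nat.primeCounting_sub_mul_log_gt hn
    _ ≤ (π (2 * n) - π n) * Real.log x := mul_le_mul_of_nonneg_left h_log h_gap

/-- Ramanujan's bound: for x > 300,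
π(x) − π(x/2) > (1/log x)(x/6 − 3√x). -/
theorem stmt_10 (x : ℝ) (hx : 300 < x) :
    (1 / Real.log x) * (x / 6 - 3 * Real.sqrt x) <
      (Nat.primeCounting ⌊x⌋₊ : ℝ) - (Nat.primeCounting ⌊x / 2⌋₊ : ℝ) := by
  have hx0 : 0 < x := by linarith
  set n := ⌊x⌋₊ / 2
  have h_half : ⌊x / 2⌋₊ = n := Nat.floor_div_ofNat x 2
  have h_lower : 2 * n ≤ x :=
    le_trans (by exact_mod_cast (by omega : 2 * n ≤ ⌊x⌋₊)) (Nat.floor_le hx0.le)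
  have h_upper : x < 2 * n + 2 := by
    have : (⌊x⌋₊ : ℝ) ≤ 2 * n + 1 := by exact_mod_cast (by omega : ⌊x⌋₊ ≤ 2 * n + 1)
    linarith [Nat.lt_floor_add_one x]
  have h_log_pos : 0 < Real.log x := Real.log_pos (by linarith)
  have h_mono : (π (2 * n) : ℝ) ≤ π ⌊x⌋₊ :=
    Nat.cast_le.2 (Nat.monotone_primeCounting (by omega))
  rw [h_half, one_div_mul_eq_div, div_lt_iff₀ h_log_pos]
  rcases lt_or_ge (√x) 18 with hx18 | hx18
  · have h_neg : x / 6 - 3 * √x < 0 := by nlinarith [Real.sq_sqrt hx0.le, Real.sqrt_nonneg x]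
    have h_gap : (0 : ℝ) ≤ π ⌊x⌋₊ - π n :=
      sub_nonneg.2 (Nat.cast_le.2 (Nat.monotone_primeCounting (by omega)))
    nlinarith
  · calc x / 6 - 3 * √x < (π (2 * n) - π n) * Real.log x :=
          div_six_sub_three_mul_sqrt_lt_primeCounting_sub_mul_log hx18 h_lower h_upper
      _ ≤ (π ⌊x⌋₊ - π n) * Real.log x := by gcongr
end

section
/- There is no highly composite number n whose largest prime factor p_r satisfies p_r ≥ 181 such that d(n) is also highly composite. -/
/-!
If `n` is highly composite, `q ∣ n` is prime and `P ∤ n` is prime, then moving half of the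
exponent of `q` onto `P` must not produce a smaller number with at least as many divisors; hence
`q ^ ⌈v_q(n)/2⌉ ≤ P`. With Bertrand's postulate this forces every prime up to the largest prime
factor `p` of `n` to divide `n`, and every exponent of `n` to be at most `2 log₂ p + 2`.
So `d n = ∏ (v_q(n) + 1)` has at least `π p` prime factors counted with multiplicity, all of them
at most `B = 2 log₂ p + 3`. If `d n` were highly composite as well, the exponent bound for it
(with `B` in place of `p`) would give `Ω (d n) ≤ ∑_{q ≤ B prime} 2 log_q (2B)`, which is
`O(log p · log log p)` and falls below `π p` for `p ≥ 181`: by direct computation while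
`p < 2 ^ 12`, and beyond that by the Chebyshev-type bound `2 ^ N ≤ (N + 1) N ^ π N`.
-/

open Finset Nat ArithmeticFunction
open scoped Nat.Prime ArithmeticFunction.Omega

theorem Nat.lcmUpto_le_pow_primeCounting (n : ℕ) : lcmUpto n ≤ n ^ π n := by
  rw [lcmUpto_eq_prod_pow_log, ← primesLE_card_eq_primeCounting, ← prod_const]
  refine prod_le_prod' fun p hp => pow_log_le_self p ?_
  have := two_le_of_mem_primesLE hp
  have := le_of_mem_primesLE hp
  omega

theorem Nat.two_pow_le_mul_pow_primeCounting (n : ℕ) : 2 ^ n ≤ (n + 1) * n ^ π n :=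
  (Chebyshev.two_pow_le_mul_lcmUpto n).trans
    (Nat.mul_le_mul_left _ (lcmUpto_le_pow_primeCounting n))

theorem Nat.log_le_log_two (b n : ℕ) : Nat.log b n ≤ Nat.log 2 n := by
  rcases le_or_gt b 1 with hb | hb
  · simp [Nat.log_of_left_le_one hb]
  · exact Nat.log_anti_left one_lt_two hb

theorem card_primeFactors_le_cardFactors_d (n : ℕ) : #n.primeFactors ≤ Ω (d n) := by
  rcases eq_or_ne n 0 with rfl | hn
  · simp
  have hprod : ∏ q ∈ n.primeFactors, (n.factorization q + 1) ≠ 0 :=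
    prod_ne_zero_iff.2 fun _ _ => succ_ne_zero _
  rw [d, Nat.card_divisors hn, prod_eq_multiset_prod, cardFactors_multiset_prod hprod,
    Multiset.map_map, ← sum_eq_multiset_sum, card_eq_sum_ones]
  refine sum_le_sum fun q hq => cardFactors_pos_iff_one_lt.2 ?_
  have := (prime_of_mem_primeFactors hq).factorization_pos_of_dvd hn (dvd_of_mem_primeFactors hq)
  simpa using this

theorem le_of_prime_dvd_d {n r B : ℕ} (hn : n ≠ 0) (hB : ∀ q, n.factorization q < B)
    (hr : r.Prime) (hrd : r ∣ d n) : r ≤ B := by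
  rw [d, Nat.card_divisors hn] at hrd
  obtain ⟨q, -, hq⟩ := hr.prime.exists_mem_finset_dvd hrd
  exact (Nat.le_of_dvd (succ_pos _) hq).trans (hB q)

theorem d_prime_pow_mul {q c : ℕ} (hq : q.Prime) (hqc : ¬ q ∣ c) (j : ℕ) :
    d (q ^ j * c) = (j + 1) * d c := by
  rw [d, Coprime.card_divisors_mul (Coprime.pow_left j ((hq.coprime_iff_not_dvd).2 hqc)),
    Nat.divisors_prime_pow hq, card_map, card_range, d]

namespace HighlyComposite

variable {n : ℕ}

theorem pow_le_of_not_dvd (hn : HighlyComposite n) {q P : ℕ} (hq : q.Prime) (hqn : q ∣ n)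
    (hP : P.Prime) (hPn : ¬ P ∣ n) : q ^ ((n.factorization q + 1) / 2) ≤ P := by
  by_contra! hPlt
  set v := n.factorization q
  set k := (v + 1) / 2
  set c := ordCompl[q] n
  have hn0 : n ≠ 0 := hn.1.ne'
  have hv : 1 ≤ v := hq.factorization_pos_of_dvd hn0 hqn
  have hc0 : 0 < c := ordCompl_pos q hn0
  have hqc : ¬ q ∣ c := not_dvd_ordCompl hq hn0
  have hPc : ¬ P ∣ c := fun h => hPn (h.trans (ordCompl_dvd n q))
  have hqPc : ¬ q ∣ P * c := by
    rintro h
    rcases hq.prime.dvd_or_dvd h with h | h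
    · exact hPn ((prime_dvd_prime_iff_eq hq hP).1 h ▸ hqn)
    · exact hqc h
  have hsplit : n = q ^ (v - k) * (q ^ k * c) := by
    rw [← mul_assoc, ← pow_add, Nat.sub_add_cancel (by omega)]
    exact (ordProj_mul_ordCompl_eq_self n q).symm
  have hsmaller : q ^ (v - k) * (P * c) < n := by
    rw [hsplit]
    exact Nat.mul_lt_mul_of_pos_left (Nat.mul_lt_mul_of_pos_right hPlt hc0) (pow_pos hq.pos _)
  have hd : d n ≤ d (q ^ (v - k) * (P * c)) := by
    have hdn : d n = (v + 1) * d c := by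
      conv_lhs => rw [← ordProj_mul_ordCompl_eq_self n q]
      exact d_prime_pow_mul hq hqc v
    rw [hdn, d_prime_pow_mul hq hqPc, ← pow_one P, d_prime_pow_mul hP hPc]
    calc (v + 1) * d c ≤ (2 * (v - k + 1)) * d c := Nat.mul_le_mul_right _ (by omega)
      _ = (v - k + 1) * ((1 + 1) * d c) := by ring
  exact (hn.2 _ (Nat.mul_pos (pow_pos hq.pos _) (Nat.mul_pos hP.pos hc0)) hsmaller).not_ge hd

theorem primesLE_subset_primeFactors (hn : HighlyComposite n) {p : ℕ} (hp : p.Prime)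
    (hpn : p ∣ n) : primesLE p ⊆ n.primeFactors := by
  intro r hr
  have hrp := prime_of_mem_primesLE hr
  refine mem_primeFactors.2 ⟨hrp, ?_, hn.1.ne'⟩
  by_contra hrn
  have hk : (n.factorization p + 1) / 2 ≠ 0 := by
    have := hp.factorization_pos_of_dvd hn.1.ne' hpn
    omega
  have hpr : p ≤ r := (le_self_pow hk p).trans (hn.pow_le_of_not_dvd hp hpn hrp hrn)
  exact hrn (le_antisymm (le_of_mem_primesLE hr) hpr ▸ hpn)

theorem pow_le_two_mul (hn : HighlyComposite n) {B q : ℕ} (hB : ∀ r, r.Prime → r ∣ n → r ≤ B)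
    (hq : q.Prime) (hqn : q ∣ n) : q ^ ((n.factorization q + 1) / 2) ≤ 2 * B := by
  obtain ⟨P, hP, hBP, hP2B⟩ := exists_prime_lt_and_le_two_mul B (by
    have := hB q hq hqn
    have := hq.two_le
    omega)
  exact (hn.pow_le_of_not_dvd hq hqn hP fun hPn => (hB P hP hPn).not_gt hBP).trans hP2B

theorem factorization_le_two_mul_log (hn : HighlyComposite n) {B : ℕ}
    (hB : ∀ r, r.Prime → r ∣ n → r ≤ B) (q : ℕ) : n.factorization q ≤ 2 * Nat.log q (2 * B) := by
  by_cases hq : q.Prime ∧ q ∣ n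
  · have := le_log_of_pow_le hq.1.one_lt (hn.pow_le_two_mul hB hq.1 hq.2)
    omega
  · rw [(factorization_eq_zero_iff _ _).2 (by tauto)]
    exact zero_le _

end HighlyComposite

def cardFactorsBound (B : ℕ) : ℕ := ∑ q ∈ primesLE B, 2 * Nat.log q (2 * B)

theorem HighlyComposite.cardFactors_le {n B : ℕ} (hn : HighlyComposite n)
    (hB : ∀ r, r.Prime → r ∣ n → r ≤ B) : Ω n ≤ cardFactorsBound B := by
  rw [cardFactors_eq_sum_factorization, Finsupp.sum, support_factorization]
  calc ∑ q ∈ n.primeFactors, n.factorization q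
      ≤ ∑ q ∈ n.primeFactors, 2 * Nat.log q (2 * B) :=
        sum_le_sum fun q _ => hn.factorization_le_two_mul_log hB q
    _ ≤ cardFactorsBound B := sum_le_sum_of_subset fun q hq =>
        mem_primesLE.2 ⟨hB q (prime_of_mem_primeFactors hq) (dvd_of_mem_primeFactors hq),
          prime_of_mem_primeFactors hq⟩

theorem cardFactorsBound_mono : Monotone cardFactorsBound := fun a b hab =>
  (sum_le_sum fun _ _ => Nat.mul_le_mul_left 2 (log_mono_right (by omega))).trans
    (sum_le_sum_of_subset (primesLE_mono hab))

theorem cardFactorsBound_le (B : ℕ) : cardFactorsBound B ≤ B * (2 * Nat.log 2 (2 * B)) := by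
  have hcard : #(primesLE B) ≤ B := by
    rw [primesLE_eq_filter_Icc_one]
    exact (card_filter_le _ _).trans (by simp)
  calc cardFactorsBound B ≤ ∑ _q ∈ primesLE B, 2 * Nat.log 2 (2 * B) :=
        sum_le_sum fun q _ => Nat.mul_le_mul_left 2 (log_le_log_two q _)
    _ ≤ B * (2 * Nat.log 2 (2 * B)) := by
        rw [sum_const, smul_eq_mul]
        exact Nat.mul_le_mul_right _ hcard

theorem Nat.two_mul_pow_three_add_le_two_pow {t : ℕ} (ht : 12 ≤ t) :
    2 * t ^ 3 + 3 * t ^ 2 + t + 1 ≤ 2 ^ t := by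
  induction t, ht using Nat.le_induction with
  | base => norm_num
  | succ t ht ih =>
    have h2 : 2 ^ (t + 1) = 2 * 2 ^ t := by ring
    nlinarith

theorem cardFactorsBound_lt_primeCounting_two_pow {t : ℕ} (ht : 12 ≤ t) :
    cardFactorsBound (2 * t + 3) < π (2 ^ t) := by
  by_contra! h
  set L := Nat.log 2 (2 * (2 * t + 3))
  have hpoly := two_mul_pow_three_add_le_two_pow ht
  have hL : 2 * L ≤ t := by
    have h2L : 2 ^ (2 * L) ≤ 2 ^ t := calc
      2 ^ (2 * L) = (2 ^ L) ^ 2 := by ring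
      _ ≤ (2 * (2 * t + 3)) ^ 2 := Nat.pow_le_pow_left (pow_log_le_self 2 (by omega)) 2
      _ ≤ 2 ^ t := by nlinarith
    exact (Nat.pow_le_pow_iff_right (by norm_num)).1 h2L
  have hπ : π (2 ^ t) ≤ (2 * t + 3) * t :=
    (h.trans (cardFactorsBound_le _)).trans (Nat.mul_le_mul_left _ hL)
  have hcheb : 2 ^ 2 ^ t < 2 ^ (t + 1 + t * π (2 ^ t)) := calc
    2 ^ 2 ^ t ≤ (2 ^ t + 1) * (2 ^ t) ^ π (2 ^ t) := two_pow_le_mul_pow_primeCounting _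
    _ < 2 ^ (t + 1) * 2 ^ (t * π (2 ^ t)) := by
        rw [← pow_mul]
        gcongr
        rw [pow_succ]
        have := Nat.one_le_two_pow (n := t)
        omega
    _ = 2 ^ (t + 1 + t * π (2 ^ t)) := (pow_add _ _ _).symm
  have := (Nat.pow_lt_pow_iff_right (by norm_num)).1 hcheb
  nlinarith

theorem cardFactorsBound_lt_primeCounting {p : ℕ} (hp : 181 ≤ p) :
    cardFactorsBound (2 * Nat.log 2 p + 3) < π p := by
  rcases le_or_gt (Nat.log 2 p) 11 with ht | ht
  · calc cardFactorsBound (2 * Nat.log 2 p + 3) ≤ cardFactorsBound 25 :=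
          cardFactorsBound_mono (by omega)
      _ = 34 := by decide
      _ < π 181 := by set_option maxRecDepth 4000 in decide
      _ ≤ π p := monotone_primeCounting hp
  · calc _ < π (2 ^ Nat.log 2 p) := cardFactorsBound_lt_primeCounting_two_pow ht
      _ ≤ π p := monotone_primeCounting (pow_log_le_self 2 (by omega))

/-- No highly composite n whose largest prime factor is ≥ 181 has d(n)
highly composite. -/
theorem stmt_14 (n : ℕ) (hn : HighlyComposite n)
    (p : ℕ) (hp : p.Prime) (hpdvd : p ∣ n)
    (hmax : ∀ q : ℕ, q.Prime → q ∣ n → q ≤ p) (h181 : 181 ≤ p) :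
    ¬ HighlyComposite (d n) := by
  intro hd
  have hexp : ∀ q, n.factorization q < 2 * Nat.log 2 p + 3 := fun q => by
    have h1 := hn.factorization_le_two_mul_log hmax q
    have h2 := log_le_log_two q (2 * p)
    have h3 : Nat.log 2 (2 * p) = Nat.log 2 p + 1 := by
      rw [mul_comm, log_mul_base one_lt_two (by omega)]
    omega
  have hπ : π p ≤ Ω (d n) := calc
    π p = #(primesLE p) := (primesLE_card_eq_primeCounting p).symm
    _ ≤ #n.primeFactors := card_le_card (hn.primesLE_subset_primeFactors hp hpdvd)
    _ ≤ Ω (d n) := card_primeFactors_le_cardFactors_d n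
  have hΩ : Ω (d n) ≤ cardFactorsBound (2 * Nat.log 2 p + 3) :=
    hd.cardFactors_le fun r hr hrd => le_of_prime_dvd_d hn.1.ne' hexp hr hrd
  exact (hπ.trans hΩ).not_gt (cardFactorsBound_lt_primeCounting h181)
end

section
/- For every prime p ≥ 11, π(p+1) − π((p+1)/2) ≥ 2, where π is the prime counting function. -/
/-!
Erdős' proof of Bertrand's postulate bounds `centralBinom n` by `(2n) ^ √(2n) · 4 ^ (2n/3)` when
`(n, 2n]` contains no prime, charging `2n` to each prime `p ≤ √(2n)`. Since `1` is not prime there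
are at most `√(2n) - 1` such primes, and the spare factor `2n` pays for a single prime in `(n, 2n]`.
So the inequality `n (2n) ^ √(2n) 4 ^ (2n/3) ≤ 4 ^ n < n · centralBinom n` of that proof, valid for
`n ≥ 512`, already forces two primes in `(n, 2n]`; smaller `n ≥ 6` are covered by an explicit list
of primes. For an odd prime `p`, `p + 1 = 2n` with `n = (p + 1) / 2`.
-/

open Finset

namespace Nat

theorem prod_pow_factorization_centralBinom_le (n N : ℕ) (hn : 0 < n) :
    ∏ p ∈ range (N + 1), p ^ (centralBinom n).factorization p ≤
      (2 * n) ^ (sqrt (2 * n) - 1) * 4 ^ N := by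
  set f := fun p => p ^ (centralBinom n).factorization p
  have h_primes : ∏ p ∈ primesLE N, f p = ∏ p ∈ range (N + 1), f p :=
    prod_filter_of_ne fun p _ hp => by
      contrapose hp
      simp [f, factorization_eq_zero_of_not_prime _ hp]
  rw [← h_primes, ← prod_filter_mul_prod_filter_not (primesLE N) (· ≤ sqrt (2 * n))]
  gcongr ?_ * ?_
  · have h_card : #{p ∈ primesLE N | p ≤ sqrt (2 * n)} ≤ sqrt (2 * n) - 1 := by
      calc #{p ∈ primesLE N | p ≤ sqrt (2 * n)}
          ≤ #(Icc 2 (sqrt (2 * n))) := card_le_card fun p hp => by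
            simp only [mem_filter] at hp
            exact mem_Icc.2 ⟨two_le_of_mem_primesLE hp.1, hp.2⟩
        _ = sqrt (2 * n) - 1 := by simp
    calc ∏ p ∈ primesLE N with p ≤ sqrt (2 * n), f p
        ≤ (2 * n) ^ #{p ∈ primesLE N | p ≤ sqrt (2 * n)} :=
          prod_le_pow_card _ _ _ fun p _ => pow_factorization_choose_le (by omega)
      _ ≤ (2 * n) ^ (sqrt (2 * n) - 1) := pow_le_pow_right₀ (by omega) h_card
  · calc ∏ p ∈ primesLE N with ¬p ≤ sqrt (2 * n), f p
        ≤ ∏ p ∈ primesLE N with ¬p ≤ sqrt (2 * n), p := prod_le_prod' fun p hp => by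
          simp only [mem_filter, not_le] at hp
          exact (pow_le_pow_right₀ (one_lt_of_mem_primesLE hp.1).le
            (factorization_choose_le_one (sqrt_lt'.1 hp.2))).trans (pow_one p).le
      _ ≤ primorial N := prod_le_prod_of_subset_of_one_le' (filter_subset _ _)
          fun p hp _ => (one_lt_of_mem_primesLE hp).le
      _ ≤ 4 ^ N := primorial_le_four_pow N

theorem centralBinom_eq_prod_mul_pow_of_unique_prime {n p₀ : ℕ} (hn : 2 < n) (hp₀ : n < p₀)
    (unique : ∀ p, p.Prime → n < p → p ≤ 2 * n → p = p₀) :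
    centralBinom n = (∏ p ∈ range (2 * n / 3 + 1), p ^ (centralBinom n).factorization p) *
      p₀ ^ (centralBinom n).factorization p₀ := by
  have h_support : (centralBinom n).factorization.support ⊆ insert p₀ (range (2 * n / 3 + 1)) := by
    intro p hp
    have hp_prime := prime_of_mem_primeFactors (support_factorization _ ▸ hp)
    rw [Finsupp.mem_support_iff] at hp
    rw [mem_insert, mem_range]
    by_contra! h
    have h_large : 2 * n < 3 * p := by omega
    rcases le_or_gt p n with hpn | hpn
    · exact hp (factorization_centralBinom_of_two_mul_self_lt_three_mul hn hpn h_large)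
    rcases le_or_gt p (2 * n) with hp2n | hp2n
    · exact h.1 (unique p hp_prime hpn hp2n)
    · exact hp (factorization_centralBinom_eq_zero_of_two_mul_lt hp2n)
  have hp₀_notMem : p₀ ∉ range (2 * n / 3 + 1) := by rw [mem_range]; omega
  conv_lhs => rw [← prod_factorization_pow_eq_self (centralBinom_ne_zero n)]
  rw [Finsupp.prod_of_support_subset _ h_support _ (fun _ _ => pow_zero _),
    prod_insert hp₀_notMem, mul_comm]

theorem centralBinom_le_of_unique_bertrand_prime {n p₀ : ℕ} (hn : 2 < n) (hp₀ : n < p₀)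
    (unique : ∀ p, p.Prime → n < p → p ≤ 2 * n → p = p₀) :
    centralBinom n ≤ (2 * n) ^ sqrt (2 * n) * 4 ^ (2 * n / 3) := by
  have h_sqrt : 1 ≤ sqrt (2 * n) := le_sqrt.2 (by omega)
  calc centralBinom n
      = (∏ p ∈ range (2 * n / 3 + 1), p ^ (centralBinom n).factorization p) *
          p₀ ^ (centralBinom n).factorization p₀ :=
        centralBinom_eq_prod_mul_pow_of_unique_prime hn hp₀ unique
    _ ≤ (2 * n) ^ (sqrt (2 * n) - 1) * 4 ^ (2 * n / 3) * (2 * n) := by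
        gcongr
        · exact prod_pow_factorization_centralBinom_le n _ (by omega)
        · exact pow_factorization_choose_le (by omega)
    _ = (2 * n) ^ sqrt (2 * n) * 4 ^ (2 * n / 3) := by
        rw [mul_right_comm, pow_sub_one_mul (by omega)]

theorem exists_two_primes_lt_and_le_two_mul_of_large {n : ℕ} (hn : 512 ≤ n) :
    ∃ q r, q.Prime ∧ r.Prime ∧ n < q ∧ q < r ∧ r ≤ 2 * n := by
  obtain ⟨p₀, hp₀, hnp₀, hp₀2n⟩ := exists_prime_lt_and_le_two_mul n (by omega)
  by_contra! h
  have unique : ∀ p, p.Prime → n < p → p ≤ 2 * n → p = p₀ := fun p hp hnp hp2n => by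
    rcases lt_trichotomy p p₀ with hlt | heq | hgt
    · exact absurd hp₀2n (h p p₀ hp hp₀ hnp hlt).not_ge
    · exact heq
    · exact absurd hp2n (h p₀ p hp₀ hp hnp₀ hgt).not_ge
  have h_upper := centralBinom_le_of_unique_bertrand_prime (by omega) hnp₀ unique
  have h_lower := four_pow_lt_mul_centralBinom n (by omega)
  grw [h_upper, ← mul_assoc, bertrand_main_inequality hn] at h_lower
  exact lt_irrefl _ h_lower

theorem primeCounting_lt_primeCounting_of_prime {m q : ℕ} (hq : q.Prime) (hmq : m < q) :
    primeCounting m < primeCounting q :=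
  (count_monotone _ hmq).trans_lt (count_strict_mono hq (lt_add_one q))

theorem two_le_primeCounting_two_mul_sub_of_primes {n q r : ℕ} (hq : q.Prime) (hr : r.Prime)
    (hnq : n < q) (hqr : q < r) (hr2n : r ≤ 2 * n) :
    2 ≤ primeCounting (2 * n) - primeCounting n := by
  have := primeCounting_lt_primeCounting_of_prime hq hnq
  have := primeCounting_lt_primeCounting_of_prime hr hqr
  have := monotone_primeCounting hr2n
  omega

theorem two_le_primeCounting_two_mul_sub_step {n : ℕ} (c q r : ℕ)
    (H : n < c → 2 ≤ primeCounting (2 * n) - primeCounting n)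
    (hq : q.Prime := by norm_num) (hr : r.Prime := by norm_num) (hqr : q < r := by norm_num)
    (hrc : r ≤ 2 * c := by norm_num) (hnq : n < q) :
    2 ≤ primeCounting (2 * n) - primeCounting n := by
  rcases lt_or_ge n c with hnc | hcn
  · exact H hnc
  · exact two_le_primeCounting_two_mul_sub_of_primes hq hr hnq hqr (by omega)

theorem two_le_primeCounting_two_mul_sub {n : ℕ} (hn : 6 ≤ n) :
    2 ≤ primeCounting (2 * n) - primeCounting n := by
  rcases le_or_gt 512 n with h | h
  · obtain ⟨q, r, hq, hr, hnq, hqr, hr2n⟩ := exists_two_primes_lt_and_le_two_mul_of_large h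
    exact two_le_primeCounting_two_mul_sub_of_primes hq hr hnq hqr hr2n
  -- in the list `7, 11, 13, …, 541, 631` of primes each entry is at most twice the one two before
  refine two_le_primeCounting_two_mul_sub_step 317 541 631 ?_ (hnq := by omega)
  refine two_le_primeCounting_two_mul_sub_step 271 317 541 ?_
  refine two_le_primeCounting_two_mul_sub_step 163 271 317 ?_
  refine two_le_primeCounting_two_mul_sub_step 139 163 271 ?_
  refine two_le_primeCounting_two_mul_sub_step 83 139 163 ?_
  refine two_le_primeCounting_two_mul_sub_step 73 83 139 ?_
  refine two_le_primeCounting_two_mul_sub_step 43 73 83 ?_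
  refine two_le_primeCounting_two_mul_sub_step 37 43 73 ?_
  refine two_le_primeCounting_two_mul_sub_step 23 37 43 ?_
  refine two_le_primeCounting_two_mul_sub_step 19 23 37 ?_
  refine two_le_primeCounting_two_mul_sub_step 13 19 23 ?_
  refine two_le_primeCounting_two_mul_sub_step 11 13 19 ?_
  refine two_le_primeCounting_two_mul_sub_step 7 11 13 ?_
  intro h7
  exact two_le_primeCounting_two_mul_sub_of_primes (q := 7) (r := 11) (by norm_num) (by norm_num)
    h7 (by norm_num) (by omega)

end Nat

/-- For every prime p ≥ 11, π(p+1) − π((p+1)/2) ≥ 2. -/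
theorem stmt_19 (p : ℕ) (hp : p.Prime) (h11 : 11 ≤ p) :
    2 ≤ Nat.primeCounting (p + 1) - Nat.primeCounting ((p + 1) / 2) := by
  have h_odd : p % 2 = 1 := hp.eq_two_or_odd.resolve_left (by omega)
  rw [show p + 1 = 2 * ((p + 1) / 2) by omega, Nat.mul_div_cancel_left _ two_pos]
  exact Nat.two_le_primeCounting_two_mul_sub (by omega)
end
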